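/- arXiv:1906.10530 — 2 statements merged into one kernel-verified Lean document; each statement's English description precedes it below -/
import Mathlib

section
/- Let G be a weighted undirected graph, T ⊆ V, F = V \ T with L_FF invertible. For u ∈ F and v ∈ T, the entry (P·1_u)(v) of the projection matrix P = [−L_TF·L_FF^{-1}, I_T] applied to the indicator of u equals the probability that the weighted random walk started at u first hits T at the vertex v. In particular, the entries {(P·1_u)(v)}_{v∈T} are nonnegative and sum to 1. -/
/-!
With `W` the weight matrix and `D` the degree matrix, the walk has transition matrix
`P = D⁻¹ W`, with blocks `Q = P_FF` and `R = P_FT`. Then `L_FF = D_F (1 - Q)` and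
`-L_FT = D_F R`, so by the symmetry of `L` the `u`-column of `-L_TF L_FF⁻¹` is the `u`-row of
`(1 - Q)⁻¹ R`. The row sums of `Qⁿ` decrease (`Q` is substochastic) to a vector fixed by `Q`,
which vanishes because `1 - Q` is invertible; hence `Qⁿ → 0` and `(1 - Q)⁻¹ R = ∑ₙ Qⁿ R`, a series
of nonnegative matrices. Its row sums are `1` because `R 𝟙 = (1 - Q) 𝟙`.
-/

open Matrix Filter Topology Finset

def lap {V : Type*} [Fintype V] [DecidableEq V] (w : V → V → ℝ) : Matrix V V ℝ :=
  Matrix.diagonal (fun i => ∑ k, w i k) - Matrix.of w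

theorem tendsto_geom_sum_of_tendsto_pow {R : Type*} [Ring R] [TopologicalSpace R]
    [IsTopologicalRing R] {x y : R} (hy : y * (1 - x) = 1)
    (hx : Tendsto (x ^ ·) atTop (𝓝 0)) :
    Tendsto (fun n => ∑ i ∈ range n, x ^ i) atTop (𝓝 y) := by
  have h : ∀ n, ∑ i ∈ range n, x ^ i = y * (1 - x ^ n) := fun n => by
    rw [← mul_neg_geom_sum, ← mul_assoc, hy, one_mul]
  simpa [h] using (hx.const_sub 1).const_mul y

namespace Matrix

variable {ι κ : Type*} [Fintype ι]

theorem toBlocks₁₁_mulVec_one_add_toBlocks₁₂_mulVec_one [Fintype κ] {α : Type*} [Semiring α]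
    {P : Matrix (ι ⊕ κ) (ι ⊕ κ) α} (hP : P *ᵥ 1 = 1) :
    P.toBlocks₁₁ *ᵥ 1 + P.toBlocks₁₂ *ᵥ 1 = 1 := by
  ext a
  simpa [mulVec, dotProduct, Fintype.sum_sum_type, toBlocks₁₁, toBlocks₁₂] using
    congrFun hP (Sum.inl a)

theorem toBlocks₁₁_mulVec_one_le_of_mem_rowStochastic [Fintype κ] [DecidableEq ι] [DecidableEq κ]
    {α : Type*} [Semiring α] [PartialOrder α] [IsOrderedRing α] {P : Matrix (ι ⊕ κ) (ι ⊕ κ) α}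
    (hP : P ∈ rowStochastic α (ι ⊕ κ)) :
    P.toBlocks₁₁ *ᵥ 1 ≤ 1 := fun a => by
  have hR : 0 ≤ (P.toBlocks₁₂ *ᵥ 1) a :=
    sum_nonneg fun t _ => mul_nonneg (nonneg_of_mem_rowStochastic hP) zero_le_one
  exact congrFun (toBlocks₁₁_mulVec_one_add_toBlocks₁₂_mulVec_one hP.2) a ▸
    le_add_of_nonneg_right hR

variable [DecidableEq ι]

theorem tendsto_pow_atTop_nhds_zero_of_mulVec_one_le {Q : Matrix ι ι ℝ}
    (hQ : ∀ i j, 0 ≤ Q i j) (hrow : Q *ᵥ 1 ≤ 1) (hdet : IsUnit (1 - Q).det) :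
    Tendsto (Q ^ ·) atTop (𝓝 0) := by
  set s : ℕ → ι → ℝ := fun n => Q ^ n *ᵥ 1
  have hs_nonneg : ∀ n, 0 ≤ s n := fun n i =>
    sum_nonneg fun j _ => mul_nonneg (pow_apply_nonneg hQ n i j) zero_le_one
  have hs_anti : Antitone s := antitone_nat_of_succ_le fun n i => by
    simp only [s, pow_succ, ← mulVec_mulVec]
    exact sum_le_sum fun j _ => mul_le_mul_of_nonneg_left (hrow j) (pow_apply_nonneg hQ n i j)
  obtain ⟨L, hL⟩ : ∃ L, Tendsto s atTop (𝓝 L) :=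
    ⟨_, tendsto_atTop_ciInf hs_anti ⟨0, by rintro _ ⟨n, rfl⟩; exact hs_nonneg n⟩⟩
  have hL_fixed : Q *ᵥ L = L := by
    have hQ_cont : Continuous (Q *ᵥ · : (ι → ℝ) → ι → ℝ) :=
      continuous_const.matrix_mulVec continuous_id
    refine tendsto_nhds_unique ?_ (hL.comp (tendsto_add_atTop_nat 1))
    convert (hQ_cont.tendsto L).comp hL using 1
    ext n : 1
    simp [s, pow_succ', mulVec_mulVec]
  have hL_zero : L = 0 := eq_zero_of_mulVec_eq_zero hdet.ne_zero <| by
    rw [sub_mulVec, one_mulVec, hL_fixed, sub_self]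
  refine tendsto_pi_nhds.2 fun i => tendsto_pi_nhds.2 fun j => ?_
  refine squeeze_zero (fun n => pow_apply_nonneg hQ n i j) (fun n => ?_)
    (hL_zero ▸ tendsto_pi_nhds.1 hL i)
  simpa [s, mulVec, dotProduct] using
    single_le_sum (fun k _ => pow_apply_nonneg hQ n i k) (mem_univ j)

theorem pow_mul_apply_nonneg {Q : Matrix ι ι ℝ} {R : Matrix ι κ ℝ} (hQ : ∀ i j, 0 ≤ Q i j)
    (hR : ∀ i k, 0 ≤ R i k) (n : ℕ) (i : ι) (k : κ) : 0 ≤ (Q ^ n * R) i k :=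
  sum_nonneg fun j _ => mul_nonneg (pow_apply_nonneg hQ n i j) (hR j k)

theorem hasSum_pow_mul_apply_of_mulVec_one_le {Q : Matrix ι ι ℝ} {R : Matrix ι κ ℝ}
    (hQ : ∀ i j, 0 ≤ Q i j) (hR : ∀ i k, 0 ≤ R i k) (hrow : Q *ᵥ 1 ≤ 1)
    (hdet : IsUnit (1 - Q).det) (i : ι) (k : κ) :
    HasSum (fun n : ℕ => (Q ^ n * R) i k) (((1 - Q)⁻¹ * R) i k) := by
  have hgeom := tendsto_geom_sum_of_tendsto_pow (nonsing_inv_mul _ hdet)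
    (tendsto_pow_atTop_nhds_zero_of_mulVec_one_le hQ hrow hdet)
  have hR_cont : Continuous fun M : Matrix ι ι ℝ => (M * R) i k :=
    ((continuous_id.matrix_mul continuous_const).matrix_elem i k)
  refine (hasSum_iff_tendsto_nat_of_nonneg (pow_mul_apply_nonneg hQ hR · i k) _).2 ?_
  simpa [Function.comp_def, Matrix.sum_mul, sum_apply] using (hR_cont.tendsto _).comp hgeom

variable [Fintype κ]

theorem sum_inv_one_sub_mul_apply {α : Type*} [CommRing α] {Q : Matrix ι ι α} {R : Matrix ι κ α}
    (hdet : IsUnit (1 - Q).det) (hrow : Q *ᵥ 1 + R *ᵥ 1 = 1) (i : ι) :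
    ∑ k, ((1 - Q)⁻¹ * R) i k = 1 := by
  have hR : R *ᵥ 1 = (1 - Q) *ᵥ 1 := by
    rw [sub_mulVec, one_mulVec]
    exact eq_sub_of_add_eq' hrow
  calc ∑ k, ((1 - Q)⁻¹ * R) i k = (((1 - Q)⁻¹ * R) *ᵥ 1) i := by simp [mulVec, dotProduct]
    _ = (((1 - Q)⁻¹ * (1 - Q)) *ᵥ 1) i := by rw [← mulVec_mulVec, hR, mulVec_mulVec]
    _ = 1 := by rw [nonsing_inv_mul _ hdet, one_mulVec]; rfl

noncomputable def schurProjection {F T α : Type*} [Fintype F] [DecidableEq F] [DecidableEq T]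
    [CommRing α]
    (M : Matrix (F ⊕ T) (F ⊕ T) α) : Matrix T (F ⊕ T) α :=
  fromCols (-(M.toBlocks₂₁ * M.toBlocks₁₁⁻¹)) 1

theorem schurProjection_mulVec_single_inl {F T α : Type*} [Fintype F] [DecidableEq F]
    [Fintype T] [DecidableEq T] [CommRing α] {M : Matrix (F ⊕ T) (F ⊕ T) α} (hM : M.IsSymm)
    (u : F) (v : T) :
    (schurProjection M *ᵥ Pi.single (Sum.inl u) 1) v = (M.toBlocks₁₁⁻¹ * -M.toBlocks₁₂) u v := by
  have h₁₁ : M.toBlocks₁₁ᵀ = M.toBlocks₁₁ := by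
    ext a b; exact hM.apply (Sum.inl a) (Sum.inl b)
  have h₂₁ : M.toBlocks₂₁ = M.toBlocks₁₂ᵀ := by
    ext a b; exact hM.apply (Sum.inl b) (Sum.inr a)
  rw [← transpose_apply (_ * _), transpose_mul, transpose_neg, transpose_nonsing_inv, h₁₁, ← h₂₁]
  simp [schurProjection]

end Matrix

noncomputable def transitionMatrix {V : Type*} [Fintype V] (w : V → V → ℝ) : Matrix V V ℝ :=
  of fun x y => w x y / ∑ z, w x z

section Graph

variable {V : Type*} [Fintype V] {w : V → V → ℝ}

variable [DecidableEq V]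

theorem transitionMatrix_mem_rowStochastic (hnonneg : ∀ x y, 0 ≤ w x y)
    (hdeg : ∀ x, ∑ y, w x y ≠ 0) : transitionMatrix w ∈ rowStochastic ℝ V := by
  refine mem_rowStochastic_iff_sum.2
    ⟨fun x y => div_nonneg (hnonneg x y) (sum_nonneg fun z _ => hnonneg x z), fun x => ?_⟩
  simp [transitionMatrix, ← sum_div, hdeg x]

theorem isSymm_lap (hsymm : ∀ x y, w x y = w y x) : (lap w).IsSymm :=
  (isSymm_diagonal _).sub (IsSymm.ext fun x y => hsymm y x)

theorem lap_eq_diagonal_mul_one_sub_transitionMatrix (hdeg : ∀ x, ∑ y, w x y ≠ 0) :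
    lap w = diagonal (fun x => ∑ y, w x y) * (1 - transitionMatrix w) := by
  ext x y
  rw [diagonal_mul, Matrix.sub_apply, one_apply, lap, Matrix.sub_apply, diagonal_apply,
    transitionMatrix, of_apply, of_apply]
  split_ifs
  · field_simp [hdeg x]
  · simp [mul_div_cancel₀ _ (hdeg x)]

end Graph

section Blocks

variable {F T : Type*} [Fintype F] [Fintype T] [DecidableEq F] [DecidableEq T]
  {w : F ⊕ T → F ⊕ T → ℝ}

theorem toBlocks₁₁_lap (hdeg : ∀ x, ∑ y, w x y ≠ 0) :
    (lap w).toBlocks₁₁ =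
      diagonal (fun a => ∑ y, w (Sum.inl a) y) * (1 - (transitionMatrix w).toBlocks₁₁) := by
  rw [lap_eq_diagonal_mul_one_sub_transitionMatrix hdeg]
  ext a b
  simp [toBlocks₁₁, diagonal_mul, one_apply]

theorem neg_toBlocks₁₂_lap (hdeg : ∀ x, ∑ y, w x y ≠ 0) :
    -(lap w).toBlocks₁₂ =
      diagonal (fun a => ∑ y, w (Sum.inl a) y) * (transitionMatrix w).toBlocks₁₂ := by
  rw [lap_eq_diagonal_mul_one_sub_transitionMatrix hdeg]
  ext a t
  simp [toBlocks₁₂, diagonal_mul]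

theorem isUnit_det_one_sub_toBlocks₁₁_transitionMatrix (hdeg : ∀ x, ∑ y, w x y ≠ 0)
    (hFF : IsUnit (lap w).toBlocks₁₁.det) :
    IsUnit (1 - (transitionMatrix w).toBlocks₁₁).det := by
  rw [toBlocks₁₁_lap hdeg, det_mul] at hFF
  exact isUnit_of_mul_isUnit_right hFF

theorem inv_toBlocks₁₁_lap_mul_neg_toBlocks₁₂ (hdeg : ∀ x, ∑ y, w x y ≠ 0) :
    (lap w).toBlocks₁₁⁻¹ * -(lap w).toBlocks₁₂ =
      (1 - (transitionMatrix w).toBlocks₁₁)⁻¹ * (transitionMatrix w).toBlocks₁₂ := by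
  have hD : IsUnit (diagonal fun a => ∑ y, w (Sum.inl a) y).det := by
    simpa [det_diagonal, prod_ne_zero_iff] using fun a => hdeg (Sum.inl a)
  rw [toBlocks₁₁_lap hdeg, neg_toBlocks₁₂_lap hdeg, Matrix.mul_inv_rev, Matrix.mul_assoc,
    ← Matrix.mul_assoc (diagonal _)⁻¹, nonsing_inv_mul _ hD, Matrix.one_mul]

end Blocks

theorem projection_is_hitting_probability_general
    {F T : Type*} [Fintype F] [Fintype T] [DecidableEq F] [DecidableEq T]
    (w : F ⊕ T → F ⊕ T → ℝ)
    (hsymm : ∀ a b, w a b = w b a) (hnonneg : ∀ a b, 0 ≤ w a b)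
    (hdeg : ∀ x : F ⊕ T, 0 < ∑ y, w x y)
    (hFF : IsUnit ((lap w).toBlocks₁₁).det)
    (u : F) :
    -- `Q` : one-step transition probabilities inside `F`;  `R` : from `F` into `T`
    (∀ v : T,
      ((Matrix.fromCols (-((lap w).toBlocks₂₁ * ((lap w).toBlocks₁₁)⁻¹)) 1)
          *ᵥ (Pi.single (Sum.inl u) 1 : F ⊕ T → ℝ)) v
        = ∑' ℓ : ℕ,
            (((Matrix.of fun a b : F => w (Sum.inl a) (Sum.inl b) / ∑ y, w (Sum.inl a) y) ^ ℓ)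
              * (Matrix.of fun (a : F) (t : T) => w (Sum.inl a) (Sum.inr t) / ∑ y, w (Sum.inl a) y))
              u v) ∧
    (∀ v : T,
      0 ≤ ((Matrix.fromCols (-((lap w).toBlocks₂₁ * ((lap w).toBlocks₁₁)⁻¹)) 1)
          *ᵥ (Pi.single (Sum.inl u) 1 : F ⊕ T → ℝ)) v) ∧
    (∑ v : T,
      ((Matrix.fromCols (-((lap w).toBlocks₂₁ * ((lap w).toBlocks₁₁)⁻¹)) 1)
          *ᵥ (Pi.single (Sum.inl u) 1 : F ⊕ T → ℝ)) v) = 1 := by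
  set Q := (transitionMatrix w).toBlocks₁₁
  set R := (transitionMatrix w).toBlocks₁₂
  have hdeg_ne : ∀ x, ∑ y, w x y ≠ 0 := fun x => (hdeg x).ne'
  have hP := transitionMatrix_mem_rowStochastic hnonneg hdeg_ne
  have hQ : ∀ a b, 0 ≤ Q a b := fun _ _ => nonneg_of_mem_rowStochastic hP
  have hR : ∀ a t, 0 ≤ R a t := fun _ _ => nonneg_of_mem_rowStochastic hP
  have hdet := isUnit_det_one_sub_toBlocks₁₁_transitionMatrix hdeg_ne hFF
  have hentry : ∀ v, (schurProjection (lap w) *ᵥ Pi.single (Sum.inl u) 1) v =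
      ((1 - Q)⁻¹ * R) u v := fun v => by
    rw [schurProjection_mulVec_single_inl (isSymm_lap hsymm),
      inv_toBlocks₁₁_lap_mul_neg_toBlocks₁₂ hdeg_ne]
  have hsum : ∀ v, HasSum (fun ℓ : ℕ => (Q ^ ℓ * R) u v) (((1 - Q)⁻¹ * R) u v) :=
    hasSum_pow_mul_apply_of_mulVec_one_le hQ hR
      (toBlocks₁₁_mulVec_one_le_of_mem_rowStochastic hP) hdet u
  change (∀ v, (schurProjection (lap w) *ᵥ Pi.single (Sum.inl u) 1) v =
      ∑' ℓ : ℕ, (Q ^ ℓ * R) u v) ∧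
    (∀ v, 0 ≤ (schurProjection (lap w) *ᵥ Pi.single (Sum.inl u) 1) v) ∧
    ∑ v, (schurProjection (lap w) *ᵥ Pi.single (Sum.inl u) 1) v = 1
  simp only [hentry]
  exact ⟨fun v => (hsum v).tsum_eq.symm,
    fun v => (hsum v).nonneg (pow_mul_apply_nonneg hQ hR · u v),
    sum_inv_one_sub_mul_apply hdet (toBlocks₁₁_mulVec_one_add_toBlocks₁₂_mulVec_one hP.2) u⟩

/-- the entries of the projection matrix applied to `1_u` are the
probabilities that the weighted random walk from `u` first hits `T` at each vertex,
expressed as the sum over walk lengths of the stay-in-`F`-then-exit probabilities;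
in particular they are nonnegative and sum to `1`. -/
theorem projection_is_hitting_probability
    {F T : Type*} [Fintype F] [Fintype T] [DecidableEq F] [DecidableEq T]
    [Nonempty T]
    (w : F ⊕ T → F ⊕ T → ℝ)
    (hsymm : ∀ a b, w a b = w b a) (hnonneg : ∀ a b, 0 ≤ w a b)
    (hdeg : ∀ x : F ⊕ T, 0 < ∑ y, w x y)
    (hreach : ∀ x : F, ∃ t : T,
      Relation.ReflTransGen (fun a b => w a b ≠ 0) (Sum.inl x) (Sum.inr t))
    (hFF : IsUnit ((lap w).toBlocks₁₁).det)
    (u : F) :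
    -- `Q` : one-step transition probabilities inside `F`;  `R` : from `F` into `T`
    (∀ v : T,
      ((Matrix.fromCols (-((lap w).toBlocks₂₁ * ((lap w).toBlocks₁₁)⁻¹)) 1)
          *ᵥ (Pi.single (Sum.inl u) 1 : F ⊕ T → ℝ)) v
        = ∑' ℓ : ℕ,
            (((Matrix.of fun a b : F => w (Sum.inl a) (Sum.inl b) / ∑ y, w (Sum.inl a) y) ^ ℓ)
              * (Matrix.of fun (a : F) (t : T) => w (Sum.inl a) (Sum.inr t) / ∑ y, w (Sum.inl a) y))
              u v) ∧
    (∀ v : T,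
      0 ≤ ((Matrix.fromCols (-((lap w).toBlocks₂₁ * ((lap w).toBlocks₁₁)⁻¹)) 1)
          *ᵥ (Pi.single (Sum.inl u) 1 : F ⊕ T → ℝ)) v) ∧
    (∑ v : T,
      ((Matrix.fromCols (-((lap w).toBlocks₂₁ * ((lap w).toBlocks₁₁)⁻¹)) 1)
          *ᵥ (Pi.single (Sum.inl u) 1 : F ⊕ T → ℝ)) v) = 1 :=
  projection_is_hitting_probability_general w hsymm hnonneg hdeg hFF u
end

section
/- For any connected weighted undirected graph G, any subset of vertices T, and any pair of vertices u, v ∈ T, the effective resistance between u and v in G equals the effective resistance between u and v in the graph whose Laplacian is the Schur complement SC(G,T) of L_G onto T. -/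
open Matrix BigOperators

/-- `B` is the Moore–Penrose pseudoinverse of `A`. -/
def IsMoorePenrose {n : Type*} [Fintype n] (A B : Matrix n n ℝ) : Prop :=
  A * B * A = A ∧ B * A * B = B ∧ (A * B)ᵀ = A * B ∧ (B * A)ᵀ = B * A

/-!
Write `b = 1_u - 1_v` on `T` and `(0, b)` for its extension by zero to `F ⊕ T`. If `L x = (0, b)`,
eliminating the `F`-block shows `SC x_T = b`, while `(0, b) ⬝ x = b ⬝ x_T`. For a symmetric `M`
with `M B M = M`, `b ⬝ B b = b ⬝ y` for every solution `y` of `M y = b`; hence both effective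
resistances equal `b ⬝ x_T`. A solution exists, namely `x = L† (0, b)`: since `ker L` consists of
the constants and `(0, b)` sums to zero, `(0, b)` lies in `(ker L)ᗮ = range L`.
-/

namespace Matrix

section SchurComplement

variable {m n α : Type*} [Fintype m] [DecidableEq m] [CommRing α]

noncomputable def schurComplement (M : Matrix (m ⊕ n) (m ⊕ n) α) : Matrix n n α :=
  M.toBlocks₂₂ - M.toBlocks₂₁ * M.toBlocks₁₁⁻¹ * M.toBlocks₁₂

theorem IsSymm.schurComplement {M : Matrix (m ⊕ n) (m ⊕ n) α} (hM : M.IsSymm) :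
    M.schurComplement.IsSymm := by
  have h₁₂ : M.toBlocks₁₂ᵀ = M.toBlocks₂₁ := by ext i j; exact hM.apply _ _
  have h₂₁ : M.toBlocks₂₁ᵀ = M.toBlocks₁₂ := by ext i j; exact hM.apply _ _
  have h₁₁ : M.toBlocks₁₁ᵀ = M.toBlocks₁₁ := (hM.submatrix Sum.inl).eq
  have h₂₂ : M.toBlocks₂₂ᵀ = M.toBlocks₂₂ := (hM.submatrix Sum.inr).eq
  rw [Matrix.schurComplement, IsSymm, transpose_sub, transpose_mul, transpose_mul,
    transpose_nonsing_inv, h₁₁, h₁₂, h₂₁, h₂₂, Matrix.mul_assoc]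

variable [Fintype n]

theorem schurComplement_mulVec_of_mulVec_eq_sumElim_zero {M : Matrix (m ⊕ n) (m ⊕ n) α}
    (hA : IsUnit M.toBlocks₁₁.det) {x : m ⊕ n → α} {b : n → α}
    (hx : M *ᵥ x = Sum.elim (0 : m → α) b) :
    M.schurComplement *ᵥ (x ∘ Sum.inr) = b := by
  rw [← fromBlocks_toBlocks M, ← Sum.elim_comp_inl_inr x, fromBlocks_mulVec] at hx
  have hinl : M.toBlocks₁₁ *ᵥ (x ∘ Sum.inl) = -(M.toBlocks₁₂ *ᵥ (x ∘ Sum.inr)) :=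
    eq_neg_of_add_eq_zero_left (congrArg (· ∘ Sum.inl) hx)
  have hinr : M.toBlocks₂₁ *ᵥ (x ∘ Sum.inl) + M.toBlocks₂₂ *ᵥ (x ∘ Sum.inr) = b :=
    congrArg (· ∘ Sum.inr) hx
  have hxl : x ∘ Sum.inl = -(M.toBlocks₁₁⁻¹ *ᵥ (M.toBlocks₁₂ *ᵥ (x ∘ Sum.inr))) := by
    rw [← mulVec_neg, ← hinl, mulVec_mulVec, nonsing_inv_mul _ hA, one_mulVec]
  rw [Matrix.schurComplement, sub_mulVec, ← mulVec_mulVec, ← mulVec_mulVec, ← hinr, hxl,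
    mulVec_neg]
  abel

end SchurComplement

section GeneralizedInverse

variable {n : Type*} [Fintype n] {M B : Matrix n n ℝ}

theorem IsSymm.dotProduct_mulVec_eq_of_mulVec_eq (hM : M.IsSymm) (hB : M * B * M = M)
    {x b : n → ℝ} (hx : M *ᵥ x = b) : b ⬝ᵥ (B *ᵥ b) = b ⬝ᵥ x := by
  subst hx
  rw [dotProduct_comm, dotProduct_mulVec, ← mulVec_transpose, hM.eq, mulVec_mulVec,
    mulVec_mulVec, hB]

theorem IsMoorePenrose.mul_mul_self (hM : M.IsSymm) (h : IsMoorePenrose M B) :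
    M * M * B = M := by
  calc M * M * B = M * (M * B)ᵀ := by rw [h.2.2.1, Matrix.mul_assoc]
    _ = (M * B * M)ᵀ := by rw [transpose_mul, transpose_mul, transpose_mul, hM.eq]
    _ = M := by rw [h.1, hM.eq]

theorem IsMoorePenrose.mulVec_mulVec_eq_self (hM : M.IsSymm) (h : IsMoorePenrose M B)
    {b : n → ℝ} (hb : ∀ z, M *ᵥ z = 0 → b ⬝ᵥ z = 0) : M *ᵥ (B *ᵥ b) = b := by
  -- the residual lies in `ker M`, so it is orthogonal to `b` and to the range of `M`
  set r := b - M *ᵥ (B *ᵥ b)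
  have hr : M *ᵥ r = 0 := by
    rw [mulVec_sub, mulVec_mulVec, mulVec_mulVec, h.mul_mul_self hM, sub_self]
  have hrr : r ⬝ᵥ r = 0 := by
    rw [sub_dotProduct, hb r hr, dotProduct_comm, dotProduct_mulVec, ← mulVec_transpose, hM.eq,
      hr, zero_dotProduct, sub_zero]
  exact (sub_eq_zero.mp (dotProduct_self_eq_zero.mp hrr)).symm

end GeneralizedInverse

end Matrix

theorem isSymm_lap_s9 {V : Type*} [Fintype V] [DecidableEq V] {w : V → V → ℝ}
    (hsymm : ∀ a b, w a b = w b a) : (lap w).IsSymm :=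
  (isSymm_diagonal _).sub (IsSymm.ext fun i j => hsymm j i)

theorem schur_complement_preserves_effective_resistance_general
    {F T : Type*} [Fintype F] [Fintype T] [DecidableEq F] [DecidableEq T]
    (w : F ⊕ T → F ⊕ T → ℝ)
    (hsymm : ∀ a b, w a b = w b a)
    (hconn : ∀ x : F ⊕ T → ℝ, (lap w) *ᵥ x = 0 → ∃ c, ∀ v, x v = c)
    (hFF : IsUnit ((lap w).toBlocks₁₁).det)
    (Ldag : Matrix (F ⊕ T) (F ⊕ T) ℝ) (hLdag : IsMoorePenrose (lap w) Ldag)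
    (SCdag : Matrix T T ℝ)
    (hSCdag : IsMoorePenrose
      ((lap w).toBlocks₂₂ -
        (lap w).toBlocks₂₁ * ((lap w).toBlocks₁₁)⁻¹ * (lap w).toBlocks₁₂) SCdag)
    (u v : T) :
    ((Pi.single (Sum.inr u) 1 - Pi.single (Sum.inr v) 1 : F ⊕ T → ℝ)
        ⬝ᵥ (Ldag *ᵥ (Pi.single (Sum.inr u) 1 - Pi.single (Sum.inr v) 1)))
      = ((Pi.single u 1 - Pi.single v 1 : T → ℝ)
        ⬝ᵥ (SCdag *ᵥ (Pi.single u 1 - Pi.single v 1))) := by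
  set b : T → ℝ := Pi.single u 1 - Pi.single v 1
  have hb : (Pi.single (Sum.inr u) 1 - Pi.single (Sum.inr v) 1 : F ⊕ T → ℝ) =
      Sum.elim (0 : F → ℝ) b := by
    ext (i | t) <;> simp [b, Pi.single_apply]
  have hL := isSymm_lap_s9 hsymm
  set x := Ldag *ᵥ Sum.elim (0 : F → ℝ) b
  have hx : lap w *ᵥ x = Sum.elim (0 : F → ℝ) b := by
    refine hLdag.mulVec_mulVec_eq_self hL fun z hz => ?_
    obtain ⟨c, hc⟩ := hconn z hz
    simp [← hb, sub_dotProduct, hc]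
  have hSC := schurComplement_mulVec_of_mulVec_eq_sumElim_zero hFF hx
  rw [hb]
  calc Sum.elim (0 : F → ℝ) b ⬝ᵥ x = b ⬝ᵥ (x ∘ Sum.inr) := by
        conv_lhs => rw [← Sum.elim_comp_inl_inr x, sumElim_dotProduct_sumElim, zero_dotProduct,
          zero_add]
    _ = b ⬝ᵥ (SCdag *ᵥ b) :=
        (hL.schurComplement.dotProduct_mulVec_eq_of_mulVec_eq hSCdag.1 hSC).symm

/-- the Schur complement preserves effective resistances among
terminal vertices. -/
theorem schur_complement_preserves_effective_resistance
    {F T : Type*} [Fintype F] [Fintype T] [DecidableEq F] [DecidableEq T]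
    [Nonempty T]
    (w : F ⊕ T → F ⊕ T → ℝ)
    (hsymm : ∀ a b, w a b = w b a) (hnonneg : ∀ a b, 0 ≤ w a b)
    (hconn : ∀ x : F ⊕ T → ℝ, (lap w) *ᵥ x = 0 → ∃ c, ∀ v, x v = c)
    (hFF : IsUnit ((lap w).toBlocks₁₁).det)
    (Ldag : Matrix (F ⊕ T) (F ⊕ T) ℝ) (hLdag : IsMoorePenrose (lap w) Ldag)
    (SCdag : Matrix T T ℝ)
    (hSCdag : IsMoorePenrose
      ((lap w).toBlocks₂₂ -
        (lap w).toBlocks₂₁ * ((lap w).toBlocks₁₁)⁻¹ * (lap w).toBlocks₁₂) SCdag)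
    (u v : T) :
    ((Pi.single (Sum.inr u) 1 - Pi.single (Sum.inr v) 1 : F ⊕ T → ℝ)
        ⬝ᵥ (Ldag *ᵥ (Pi.single (Sum.inr u) 1 - Pi.single (Sum.inr v) 1)))
      = ((Pi.single u 1 - Pi.single v 1 : T → ℝ)
        ⬝ᵥ (SCdag *ᵥ (Pi.single u 1 - Pi.single v 1))) :=
  schur_complement_preserves_effective_resistance_general w hsymm hconn hFF Ldag hLdag SCdag hSCdag
    u v
end
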